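/- Lower volume bound for regular control volumes: Let Ω be an open bounded connected polygonal subset of ℝ^d (d ≥ 1), let D be an admissible finite volume discretization of Ω, let K ∈ M, and let θ > 0 be such that d_{K,σ} ≥ θ · diam(K) for all σ ∈ E_K. Then there exists σ ∈ E_K with the open ball B(x_K, d_{K,σ}) contained in K, and consequently m(K) ≥ m(B(0,1)) · θ^d · diam(K)^d, where m(B(0,1)) is the Lebesgue measure of the unit ball of ℝ^d. -/

import Mathlib

open MeasureTheory Filter Topology
open scoped ENNReal RealInnerProductSpace Classical

noncomputable section

/-- Points of `ℝ^d`. -/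
abbrev EucSp (d : ℕ) := EuclideanSpace ℝ (Fin d)

/-- A bounded subset of `ℝ^d` is polygonal if its boundary is contained in a
finite union of affine hyperplanes. -/
def IsPolygonal {d : ℕ} (A : Set (EucSp d)) : Prop :=
  ∃ s : Finset (EucSp d × ℝ), (∀ p ∈ s, p.1 ≠ 0) ∧
    frontier A ⊆ ⋃ p ∈ s, {y | ⟪p.1, y⟫ = p.2}

/-- `Ω` is an open bounded connected polygonal subset of `ℝ^d`. -/
def GoodDomain {d : ℕ} (Ω : Set (EucSp d)) : Prop :=
  IsOpen Ω ∧ Bornology.IsBounded Ω ∧ IsConnected Ω ∧ IsPolygonal Ω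

/-- The `(d-1)`-dimensional Hausdorff measure on `ℝ^d`, used as the surface
measure on the edges of the mesh. -/
def sMeas (d : ℕ) : Measure (EucSp d) := MeasureTheory.Measure.hausdorffMeasure ((d : ℝ) - 1)

/-- `d`-dimensional Lebesgue measure of a set (as a real number). -/
def mK {d : ℕ} (K : Set (EucSp d)) : ℝ := (volume K).toReal

/-- `(d-1)`-dimensional measure of an edge (as a real number). -/
def mS {d : ℕ} (σ : Set (EucSp d)) : ℝ := (sMeas d σ).toReal

/-- The barycenter `x_σ` of an edge `σ`. -/
def xS {d : ℕ} (σ : Set (EucSp d)) : EucSp d := (mS σ)⁻¹ • ∫ y in σ, y ∂(sMeas d)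

/-- An admissible finite volume discretization `D = (M, E, P)` of `Ω`
(Definition 2.1 of the paper), together with the outward unit normals
`nK K σ`, and the orthogonal projections `z σ` of the cell centers on the
boundary edges. -/
structure FVDisc (d : ℕ) (Ω : Set (EucSp d)) where
  /-- the control volumes -/
  M : Finset (Set (EucSp d))
  /-- the edges of the mesh -/
  Edges : Finset (Set (EucSp d))
  /-- the set `E_K` of edges of a control volume `K` -/
  EK : Set (EucSp d) → Finset (Set (EucSp d))
  /-- the cell centers `x_K` -/
  x : Set (EucSp d) → EucSp d
  /-- the orthogonal projection `z_σ` of `x_K` on a boundary edge `σ ∈ E_K` -/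
  z : Set (EucSp d) → EucSp d
  /-- `nK K σ` is the unit normal vector to `σ ∈ E_K` outward to `K` -/
  nK : Set (EucSp d) → Set (EucSp d) → EucSp d
  cell_nonempty : ∀ K ∈ M, K.Nonempty
  cell_open : ∀ K ∈ M, IsOpen K
  cell_convex : ∀ K ∈ M, Convex ℝ K
  cell_polygonal : ∀ K ∈ M, IsPolygonal K
  cell_subset : ∀ K ∈ M, K ⊆ Ω
  cell_disjoint : ∀ K ∈ M, ∀ L ∈ M, K ≠ L → K ∩ L = ∅
  cover : closure Ω = ⋃ K ∈ M, closure K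
  edge_hyperplane : ∀ σ ∈ Edges, ∃ (a : EucSp d) (c : ℝ), a ≠ 0 ∧ σ.Nonempty ∧
      σ ⊆ {y | ⟪a, y⟫ = c} ∧ ∃ K ∈ M, closure σ = frontier K ∩ {y | ⟪a, y⟫ = c}
  edges_disjoint : ∀ σ ∈ Edges, ∀ σ' ∈ Edges, σ ≠ σ' → σ ∩ σ' = ∅
  EK_subset : ∀ K ∈ M, EK K ⊆ Edges
  bK_cover : ∀ K ∈ M, frontier K = ⋃ σ ∈ EK K, closure σ
  edge_dichotomy : ∀ σ ∈ Edges, σ ⊆ frontier Ω ∨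
      ∃ K ∈ M, ∃ L ∈ M, K ≠ L ∧ σ ∈ EK K ∧ σ ∈ EK L ∧
        closure σ = closure K ∩ closure L
  edge_two_cells : ∀ σ ∈ Edges, ∀ K ∈ M, ∀ L ∈ M, ∀ L' ∈ M,
      σ ∈ EK K → σ ∈ EK L → σ ∈ EK L' → L ≠ K → L' ≠ K → L = L'
  x_mem : ∀ K ∈ M, x K ∈ K
  orth : ∀ K ∈ M, ∀ L ∈ M, K ≠ L → ∀ σ ∈ EK K, σ ∈ EK L →
      ∀ y ∈ σ, ∀ y' ∈ σ, ⟪x L - x K, y - y'⟫ = 0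
  z_proj : ∀ K ∈ M, ∀ σ ∈ EK K, σ ⊆ frontier Ω →
      z σ ∈ σ ∧ ∀ y ∈ σ, ⟪x K - z σ, y - z σ⟫ = 0
  nK_norm : ∀ K ∈ M, ∀ σ ∈ EK K, ‖nK K σ‖ = 1
  nK_orth : ∀ K ∈ M, ∀ σ ∈ EK K, ∀ y ∈ σ, ∀ y' ∈ σ, ⟪nK K σ, y - y'⟫ = 0
  nK_outward : ∀ K ∈ M, ∀ σ ∈ EK K, ∀ y ∈ σ, 0 < ⟪nK K σ, y - x K⟫

namespace FVDisc

variable {d : ℕ} {Ω : Set (EucSp d)}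

/-- The distance `d_{K,σ}` from the cell center `x_K` to the edge `σ`. -/
def dK (D : FVDisc d Ω) (K σ : Set (EucSp d)) : ℝ := Metric.infDist (D.x K) σ

/-- Boundary edges of `K` (those included in `∂Ω`). -/
def extEK (D : FVDisc d Ω) (K : Set (EucSp d)) : Finset (Set (EucSp d)) :=
  (D.EK K).filter (fun σ => σ ⊆ frontier Ω)

/-- Interior edges of `K`. -/
def intEK (D : FVDisc d Ω) (K : Set (EucSp d)) : Finset (Set (EucSp d)) :=
  (D.EK K).filter (fun σ => ¬ σ ⊆ frontier Ω)

/-- The neighbours of `K` through the edge `σ` (for an interior edge there is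
exactly one such neighbour `L`, and `σ = K|L`). -/
def nbr (D : FVDisc d Ω) (K σ : Set (EucSp d)) : Finset (Set (EucSp d)) :=
  D.M.filter (fun L => L ≠ K ∧ σ ∈ D.EK L)

/-- The half diamond `D_{K,σ} = {t x_K + (1-t) y, t ∈ (0,1), y ∈ σ}`. -/
def cone (D : FVDisc d Ω) (K σ : Set (EucSp d)) : Set (EucSp d) :=
  {p | ∃ t ∈ Set.Ioo (0 : ℝ) 1, ∃ y ∈ σ, p = t • D.x K + (1 - t) • y}

/-- The mean value of `α` over a set `S` (w.r.t. Lebesgue measure). -/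
def meanOn (α : EucSp d → ℝ) (S : Set (EucSp d)) : ℝ :=
  (volume S).toReal⁻¹ * ∫ y in S, α y

/-- The bilinear form `[u,v]_{D,α}`; each interior edge `σ = K|L` is counted
twice in the triple sum, whence the factor `1/2`. -/
def bilin (D : FVDisc d Ω) (α : EucSp d → ℝ) (u v : Set (EucSp d) → ℝ) : ℝ :=
  (1 / 2) * ∑ K ∈ D.M, ∑ σ ∈ D.intEK K, ∑ L ∈ D.nbr K σ,
      (mS σ / dist (D.x K) (D.x L)) * meanOn α (D.cone K σ ∪ D.cone L σ)
        * (u L - u K) * (v L - v K)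
  + ∑ K ∈ D.M, ∑ σ ∈ D.extEK K,
      (mS σ / D.dK K σ) * meanOn α (D.cone K σ) * u K * v K

/-- The discrete `H¹` norm `‖u‖_D = [u,u]_{D,1}^{1/2}`. -/
def normD (D : FVDisc d Ω) (u : Set (EucSp d) → ℝ) : ℝ :=
  Real.sqrt (D.bilin (fun _ => 1) u u)

/-- The discrete gradient `∇_D u` on the cell `K`. -/
def gradD (D : FVDisc d Ω) (u : Set (EucSp d) → ℝ) (K : Set (EucSp d)) : EucSp d :=
  (mK K)⁻¹ • (
    (∑ σ ∈ D.intEK K, ∑ L ∈ D.nbr K σ,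
        ((mS σ / dist (D.x K) (D.x L)) * (u L - u K)) • (xS σ - D.x K))
    - ∑ σ ∈ D.extEK K, ((mS σ / D.dK K σ) * u K) • (xS σ - D.x K))

/-- The element of `H_D ⊂ L²(Ω)` with value `u K` on each cell `K`. -/
def pcf (D : FVDisc d Ω) (u : Set (EucSp d) → ℝ) : EucSp d → ℝ :=
  fun y => ∑ K ∈ D.M, Set.indicator K (fun _ => u K) y

/-- The discrete gradient `∇_D u` as a (piecewise constant) vector field. -/
def gradFn (D : FVDisc d Ω) (u : Set (EucSp d) → ℝ) : EucSp d → EucSp d :=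
  fun y => ∑ K ∈ D.M, Set.indicator K (fun _ => D.gradD u K) y

/-- The interpolation operator `P_D`. -/
def interp (D : FVDisc d Ω) (f : EucSp d → ℝ) : Set (EucSp d) → ℝ :=
  fun K => f (D.x K)

/-- The mesh size `h_D`. -/
def meshSize (D : FVDisc d Ω) : ℝ := ⨆ K ∈ D.M, Metric.diam K

/-- `θ ∈ (0, θ_D]`, expressed as `d_{K,σ} ≥ θ diam(K)` for all cells and
edges. -/
def θRegular (D : FVDisc d Ω) (θ : ℝ) : Prop :=
  ∀ K ∈ D.M, ∀ σ ∈ D.EK K, θ * Metric.diam K ≤ D.dK K σ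

end FVDisc

/-- Smooth compactly supported test functions on `Ω`. -/
def IsTestFun {d : ℕ} (Ω : Set (EucSp d)) (φ : EucSp d → ℝ) : Prop :=
  ContDiff ℝ (⊤ : ℕ∞) φ ∧ HasCompactSupport φ ∧ tsupport φ ⊆ Ω

/-- `u ∈ H¹₀(Ω)`, with (weak) gradient `gu`: the extensions of `u` and `gu`
by `0` outside `Ω` satisfy the integration by parts formula on `ℝ^d`. -/
def IsH10 {d : ℕ} (Ω : Set (EucSp d)) (u : EucSp d → ℝ) (gu : EucSp d → EucSp d) : Prop :=
  MemLp u 2 volume ∧ MemLp gu 2 volume ∧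
  (∀ y ∉ Ω, u y = 0) ∧ (∀ y ∉ Ω, gu y = 0) ∧
  ∀ φ : EucSp d → ℝ, ContDiff ℝ (⊤ : ℕ∞) φ → HasCompactSupport φ → ∀ i : Fin d,
    ∫ y, u y * fderiv ℝ φ y (EuclideanSpace.single i 1)
      = - ∫ y, gu y i * φ y

/-- `v ∈ H¹(ω)` with weak gradient `gv`. -/
def IsH1On {d : ℕ} (ω : Set (EucSp d)) (v : EucSp d → ℝ) (gv : EucSp d → EucSp d) : Prop :=
  MemLp v 2 (volume.restrict ω) ∧ MemLp gv 2 (volume.restrict ω) ∧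
  ∀ φ : EucSp d → ℝ, IsTestFun ω φ → ∀ i : Fin d,
    ∫ y in ω, v y * fderiv ℝ φ y (EuclideanSpace.single i 1)
      = - ∫ y in ω, gv y i * φ y

/-- `Hu` is the (matrix of) weak second derivatives of a function with weak
gradient `gu` on `Ω`, and is square integrable on `Ω`. -/
def HasWeakHessOn {d : ℕ} (Ω : Set (EucSp d)) (gu : EucSp d → EucSp d)
    (Hu : EucSp d → Fin d → Fin d → ℝ) : Prop :=
  (∀ i j : Fin d, MemLp (fun y => Hu y i j) 2 (volume.restrict Ω)) ∧
  ∀ φ : EucSp d → ℝ, IsTestFun Ω φ → ∀ i j : Fin d,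
    ∫ y in Ω, gu y i * fderiv ℝ φ y (EuclideanSpace.single j 1)
      = - ∫ y in Ω, Hu y i j * φ y

/-- The `H²(Ω)` norm of `u`, given its weak gradient `gu` and weak Hessian `Hu`. -/
def H2norm {d : ℕ} (Ω : Set (EucSp d)) (u : EucSp d → ℝ) (gu : EucSp d → EucSp d)
    (Hu : EucSp d → Fin d → Fin d → ℝ) : ℝ :=
  Real.sqrt ((∫ y in Ω, (u y) ^ 2) + (∫ y in Ω, ‖gu y‖ ^ 2)
    + ∫ y in Ω, ∑ i, ∑ j, (Hu y i j) ^ 2)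

/-- The standing hypotheses (3)-(4) on the data `Λ, α, β, α₀, f` of the
anisotropic diffusion problem. -/
def Standing {d : ℕ} (Ω : Set (EucSp d)) (Λ : EucSp d → Matrix (Fin d) (Fin d) ℝ)
    (α β : EucSp d → ℝ) (α₀ : ℝ) (f : EucSp d → ℝ) : Prop :=
  (∀ i j : Fin d, Measurable fun y => Λ y i j) ∧
  (∀ᵐ y ∂(volume.restrict Ω), (Λ y).IsSymm) ∧
  (∀ᵐ y ∂(volume.restrict Ω), ∀ v : Fin d → ℝ,
      α y * (∑ i, v i ^ 2) ≤ ∑ i, ∑ j, v i * Λ y i j * v j ∧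
      ∑ i, ∑ j, v i * Λ y i j * v j ≤ β y * (∑ i, v i ^ 2)) ∧
  Measurable α ∧ Measurable β ∧
  MemLp α ⊤ (volume.restrict Ω) ∧ MemLp β ⊤ (volume.restrict Ω) ∧
  0 < α₀ ∧ (∀ᵐ y ∂(volume.restrict Ω), α₀ ≤ α y ∧ α y ≤ β y) ∧
  MemLp f 2 (volume.restrict Ω)

/-- The finite volume scheme (15):
`∫_Ω (Λ - α I_d) ∇_D u · ∇_D v + [u,v]_{D,α} = ∫_Ω f v` for all `v ∈ H_D`. -/
def SolvesScheme {d : ℕ} {Ω : Set (EucSp d)} (D : FVDisc d Ω)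
    (Λ : EucSp d → Matrix (Fin d) (Fin d) ℝ) (α : EucSp d → ℝ) (f : EucSp d → ℝ)
    (u : Set (EucSp d) → ℝ) : Prop :=
  ∀ v : Set (EucSp d) → ℝ,
    (∫ y in Ω, ∑ i, ∑ j, (Λ y i j - if i = j then α y else 0)
        * D.gradFn u y j * D.gradFn v y i)
      + D.bilin α u v
    = ∫ y in Ω, f y * D.pcf v y

/-- `ū` is a weak solution of the homogeneous Dirichlet problem
`-div(Λ ∇ū) = f` in `Ω`, `ū = 0` on `∂Ω` (Definition 1.1). -/
def IsWeakSol {d : ℕ} (Ω : Set (EucSp d)) (Λ : EucSp d → Matrix (Fin d) (Fin d) ℝ)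
    (f : EucSp d → ℝ) (u : EucSp d → ℝ) (gu : EucSp d → EucSp d) : Prop :=
  IsH10 Ω u gu ∧
  ∀ v : EucSp d → ℝ, ∀ gv : EucSp d → EucSp d, IsH10 Ω v gv →
    (∫ y in Ω, ∑ i, ∑ j, Λ y i j * gu y j * gv y i) = ∫ y in Ω, f y * v y

open FVDisc
/-- **Lower volume bound for regular control volumes** (inequality (45)): if
`d_{K,σ} ≥ θ diam(K)` for all `σ ∈ E_K`, then some ball `B(x_K, d_{K,σ})` is
contained in `K`, and `m(K) ≥ m(B(0,1)) θ^d diam(K)^d`. -/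
theorem cell_volume_lower_bound
    (d : ℕ) (hd : 1 ≤ d) (Ω : Set (EucSp d)) (hΩ : GoodDomain Ω)
    (D : FVDisc d Ω) (K : Set (EucSp d)) (hK : K ∈ D.M)
    (θ : ℝ) (hθ : 0 < θ)
    (hreg : ∀ σ ∈ D.EK K, θ * Metric.diam K ≤ D.dK K σ) :
    (∃ σ ∈ D.EK K, Metric.ball (D.x K) (D.dK K σ) ⊆ K) ∧
    (volume (Metric.ball (0 : EucSp d) 1)).toReal * θ ^ d * Metric.diam K ^ d
      ≤ mK K := by
  classical
  have hxK := D.x_mem K hK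
  haveI : Nonempty (Fin d) := ⟨⟨0, hd⟩⟩
  have hKbdd : Bornology.IsBounded K := hΩ.2.1.subset (D.cell_subset K hK)
  have hKne_univ : K ≠ Set.univ := by
    intro h
    rw [h] at hKbdd
    exact NormedSpace.unbounded_univ ℝ (EucSp d) hKbdd
  obtain ⟨y, hyF, hyd⟩ := exists_mem_frontier_infDist_compl_eq_dist hxK hKne_univ
  rw [D.bK_cover K hK] at hyF
  simp only [Set.mem_iUnion] at hyF
  obtain ⟨σ, hσ, hyσ⟩ := hyF
  have h1 : D.dK K σ ≤ Metric.infDist (D.x K) Kᶜ := by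
    rw [hyd]
    calc D.dK K σ = Metric.infDist (D.x K) (closure σ) :=
          (Metric.infDist_closure).symm
      _ ≤ dist (D.x K) y := Metric.infDist_le_dist_of_mem hyσ
  have hball : Metric.ball (D.x K) (D.dK K σ) ⊆ K :=
    (Metric.ball_subset_ball h1).trans Metric.ball_infDist_compl_subset
  refine ⟨⟨σ, hσ, hball⟩, ?_⟩
  have hθd : (0 : ℝ) ≤ θ * Metric.diam K := mul_nonneg hθ.le Metric.diam_nonneg
  have hsub : Metric.ball (D.x K) (θ * Metric.diam K) ⊆ K :=
    (Metric.ball_subset_ball (hreg σ hσ)).trans hball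
  have hvol : volume (Metric.ball (D.x K) (θ * Metric.diam K)) ≤ volume K :=
    measure_mono hsub
  rw [MeasureTheory.Measure.addHaar_ball _ _ hθd] at hvol
  have hfr : Module.finrank ℝ (EucSp d) = d := finrank_euclideanSpace_fin
  rw [hfr] at hvol
  have hKfin : volume K ≠ ⊤ := hKbdd.measure_lt_top.ne
  have hBfin : volume (Metric.ball (0 : EucSp d) 1) ≠ ⊤ :=
    Metric.isBounded_ball.measure_lt_top.ne
  have h2 : (ENNReal.ofReal ((θ * Metric.diam K) ^ d)
      * volume (Metric.ball (0 : EucSp d) 1)).toReal ≤ (volume K).toReal :=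
    ENNReal.toReal_mono hKfin hvol
  rw [ENNReal.toReal_mul, ENNReal.toReal_ofReal (pow_nonneg hθd d)] at h2
  calc (volume (Metric.ball (0 : EucSp d) 1)).toReal * θ ^ d * Metric.diam K ^ d
      = (θ * Metric.diam K) ^ d * (volume (Metric.ball (0 : EucSp d) 1)).toReal := by
        rw [mul_pow]; ring
    _ ≤ (volume K).toReal := h2
    _ = mK K := rfl
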